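/- Shift operator of H₆ for the block shift sh₃ (Theorem on shift operators of H₆, third case): for all e ∈ ℂ⁹ and u ∈ ℂ, with α₃ := 20 − s₁₁²/3 − 2s₁₁s₁₃/3 + s₁₂²/3 − s₁₃²/3 − 2s₁₁ + 7s₁₃ + s₂₁ − s₂₂ + 2s₂₃ (computed from e), the identity H₆(sh₃(e), u − α₃) ∘ ∂ = ∂ ∘ H₆(e,u) holds in End_ℂ(ℂ[x]). -/
import Mathlib


open Polynomial

noncomputable section

abbrev EndP := Module.End ℂ (Polynomial ℂ)

/-- The formal derivative `∂` as a linear endomorphism of `ℂ[x]`. -/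
def D : EndP := Polynomial.derivative

/-- Multiplication by the polynomial `p` as a linear endomorphism of `ℂ[x]`. -/
def M (p : Polynomial ℂ) : EndP := LinearMap.mulLeft ℂ p

/-- The Euler operator `θ = x·∂`. -/
def θop : EndP := M X * D

/-- `s = (6 − e₁ − ⋯ − e₉)/3`. -/
def sC (e1 e2 e3 e4 e5 e6 e7 e8 e9 : ℂ) : ℂ :=
  (6 - e1 - e2 - e3 - e4 - e5 - e6 - e7 - e8 - e9) / 3

def T12C (e1 e2 e3 _e4 _e5 _e6 e7 e8 e9 : ℂ) : ℂ :=
  (e1 + e2 + e3) - 2 * (e7 + e8 + e9) - 9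

def T11C (e1 e2 e3 e4 e5 e6 e7 e8 e9 : ℂ) : ℂ :=
  let s11 := e1 + e2 + e3;
  let s12 := e4 + e5 + e6;
  let s13 := e7 + e8 + e9;
  let s21 := e1*e2 + e1*e3 + e2*e3;
  let s22 := e4*e5 + e4*e6 + e5*e6;
  let s23 := e7*e8 + e7*e9 + e8*e9;
  -8 + (s11^2 + 2*s11*s13 - s12^2 + s13^2)/3 + s11 - 5*s13 - s21 + s22 - 2*s23

def T22C (e1 e2 e3 _e4 _e5 _e6 e7 e8 e9 : ℂ) : ℂ :=
  -2 * (e1 + e2 + e3) + (e7 + e8 + e9) + 18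

def T21C (e1 e2 e3 e4 e5 e6 e7 e8 e9 : ℂ) : ℂ :=
  let s11 := e1 + e2 + e3;
  let s12 := e4 + e5 + e6;
  let s13 := e7 + e8 + e9;
  let s21 := e1*e2 + e1*e3 + e2*e3;
  let s22 := e4*e5 + e4*e6 + e5*e6;
  let s23 := e7*e8 + e7*e9 + e8*e9;
  35 + (-s11^2 - 2*s11*s13 + s12^2 - s13^2)/3 - 7*s11 + 5*s13 + 2*s21 - s22 + s23

def T20C (e1 e2 e3 e4 e5 e6 e7 e8 e9 u : ℂ) : ℂ :=
  let s11 := e1 + e2 + e3;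
  let s12 := e4 + e5 + e6;
  let s13 := e7 + e8 + e9;
  let s21 := e1*e2 + e1*e3 + e2*e3;
  let s22 := e4*e5 + e4*e6 + e5*e6;
  let s31 := e1*e2*e3;
  let s32 := e4*e5*e6;
  let s33 := e7*e8*e9;
  -u + 19 + (s11^2*s13 - s11*s12^2 + s11*s13^2 - s12^2*s13)/9
    + (s13^3 + s11^3 - 2*s12^3)/27
    + (-2*s11^2 - 4*s11*s13 + s11*s22 + 2*s12^2 + s22*s12 - 2*s13^2 + s22*s13)/3
    - 5*s11 + 4*s13 + 3*s21 - 2*s22 - s31 - s32 - s33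

/-- `B₀(t) = (t+e₇)(t+e₈)(t+e₉)`. -/
def B0op (e7 e8 e9 : ℂ) (t : EndP) : EndP :=
  (t + e7 • 1) * (t + e8 • 1) * (t + e9 • 1)

/-- `B₁(t) = −3t³ + T₁₂t² + T₁₁t + u`. -/
def B1op (e1 e2 e3 e4 e5 e6 e7 e8 e9 u : ℂ) (t : EndP) : EndP :=
  (-3 : ℂ) • t ^ 3 + (T12C e1 e2 e3 e4 e5 e6 e7 e8 e9) • t ^ 2
    + (T11C e1 e2 e3 e4 e5 e6 e7 e8 e9) • t + u • 1

/-- `B₂(t) = 3t³ + T₂₂t² + T₂₁t + T₂₀`. -/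
def B2op (e1 e2 e3 e4 e5 e6 e7 e8 e9 u : ℂ) (t : EndP) : EndP :=
  (3 : ℂ) • t ^ 3 + (T22C e1 e2 e3 e4 e5 e6 e7 e8 e9) • t ^ 2
    + (T21C e1 e2 e3 e4 e5 e6 e7 e8 e9) • t + (T20C e1 e2 e3 e4 e5 e6 e7 e8 e9 u) • 1

/-- `T₃(t) = −(t+3−e₁)(t+3−e₂)(t+3−e₃)`. -/
def T3op (e1 e2 e3 : ℂ) (t : EndP) : EndP :=
  -((t + (3 - e1) • 1) * (t + (3 - e2) • 1) * (t + (3 - e3) • 1))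

/-- The operator `H₆(e,u)`. -/
def H6op (e1 e2 e3 e4 e5 e6 e7 e8 e9 u : ℂ) : EndP :=
  let s := sC e1 e2 e3 e4 e5 e6 e7 e8 e9;
  (θop + (s + 2) • 1) * (θop + (s + 1) • 1) * (θop + s • 1) * B0op e7 e8 e9 θop
    + (θop + (s + 2) • 1) * (θop + (s + 1) • 1) * B1op e1 e2 e3 e4 e5 e6 e7 e8 e9 u θop * D
    + (θop + (s + 2) • 1) * B2op e1 e2 e3 e4 e5 e6 e7 e8 e9 u θop * D ^ 2
    + T3op e1 e2 e3 θop * D ^ 3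

/- ## Auxiliary lemmas -/

lemma endp_ext {f g : EndP} (h : ∀ n : ℕ, f (X^n) = g (X^n)) : f = g := by
  apply LinearMap.ext
  intro p
  induction p using Polynomial.induction_on' with
  | add p q hp hq => simp [map_add, hp, hq]
  | monomial n a =>
      have hm : (monomial n a : Polynomial ℂ) = a • X^n := by
        rw [smul_eq_C_mul, C_mul_X_pow_eq_monomial]
      rw [hm, map_smul, map_smul, h]

lemma D_apply (n : ℕ) : D ((X:Polynomial ℂ)^n) = (n:ℂ) • X^(n-1) := by
  simp [D, derivative_X_pow, smul_eq_C_mul]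

lemma theta_apply (n : ℕ) : θop ((X:Polynomial ℂ)^n) = (n:ℂ) • X^n := by
  cases n with
  | zero => simp [θop, D, M, Module.End.mul_apply]
  | succ k =>
    simp [θop, D, M, Module.End.mul_apply, derivative_X_pow, smul_eq_C_mul]
    ring

lemma theta_pow_apply (k n : ℕ) : (θop^k) ((X:Polynomial ℂ)^n) = ((n:ℂ))^k • X^n := by
  induction k with
  | zero => simp
  | succ j ih => rw [pow_succ, Module.End.mul_apply, theta_apply, map_smul, ih, smul_smul]; ring_nf

lemma Dsq_apply (p : Polynomial ℂ) : (D^2) p = D (D p) := by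
  rw [pow_two]; rfl

lemma Dcube_apply (p : Polynomial ℂ) : (D^3) p = D (D (D p)) := by
  rw [pow_succ, pow_two]; rfl

lemma nsub4 (m : ℕ) : m + 4 - 1 = m + 3 := rfl
lemma nsub3 (m : ℕ) : m + 3 - 1 = m + 2 := rfl
lemma nsub2 (m : ℕ) : m + 2 - 1 = m + 1 := rfl
lemma nsub1 (m : ℕ) : m + 1 - 1 = m := rfl

/-- Generic form of `H₆` with all scalar parameters free. -/
def H6gen (s u t12 t11 t22 t21 t20 g1 g2 g3 g7 g8 g9 : ℂ) : EndP :=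
  (θop + (s + 2) • 1) * (θop + (s + 1) • 1) * (θop + s • 1) *
      ((θop + g7 • 1) * (θop + g8 • 1) * (θop + g9 • 1))
    + (θop + (s + 2) • 1) * (θop + (s + 1) • 1) *
        ((-3 : ℂ) • θop ^ 3 + t12 • θop ^ 2 + t11 • θop + u • 1) * D
    + (θop + (s + 2) • 1) *
        ((3 : ℂ) • θop ^ 3 + t22 • θop ^ 2 + t21 • θop + t20 • 1) * D ^ 2
    + (-((θop + (3 - g1) • 1) * (θop + (3 - g2) • 1) * (θop + (3 - g3) • 1))) * D ^ 3

lemma H6op_eq (e1 e2 e3 e4 e5 e6 e7 e8 e9 u : ℂ) :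
    H6op e1 e2 e3 e4 e5 e6 e7 e8 e9 u
      = H6gen (sC e1 e2 e3 e4 e5 e6 e7 e8 e9) u
          (T12C e1 e2 e3 e4 e5 e6 e7 e8 e9) (T11C e1 e2 e3 e4 e5 e6 e7 e8 e9)
          (T22C e1 e2 e3 e4 e5 e6 e7 e8 e9) (T21C e1 e2 e3 e4 e5 e6 e7 e8 e9)
          (T20C e1 e2 e3 e4 e5 e6 e7 e8 e9 u) e1 e2 e3 e7 e8 e9 := rfl


lemma hlin (c c' : ℂ) (h : c' = c + 1) :
    D * (θop + c • (1:EndP)) = (θop + c' • (1:EndP)) * D := by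
  subst h
  apply endp_ext
  intro n
  match n with
  | 0 =>
      simp only [Module.End.mul_apply, LinearMap.add_apply, LinearMap.smul_apply,
        Module.End.one_apply, map_add, map_smul, theta_apply, D_apply]
      norm_num
  | (m+1) =>
      simp only [Module.End.mul_apply, LinearMap.add_apply, LinearMap.smul_apply,
        Module.End.one_apply, map_add, map_smul, theta_apply, D_apply, smul_smul, nsub1]
      match_scalars <;> (push_cast; ring)

lemma pushR (c c' : ℂ) (h' : c' = c + 1) {R S : EndP} (h : D * R = S) :
    D * ((θop + c • 1) * R) = (θop + c' • 1) * S := by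
  rw [← mul_assoc, hlin c c' h', mul_assoc, h]

lemma pushPoly (a b c d b' c' d' : ℂ) (hb : b' = 3*a + b) (hc : c' = 3*a + 2*b + c)
    (hd : d' = a + b + c + d) :
    D * (a • θop^3 + b • θop^2 + c • θop + d • (1:EndP))
      = (a • θop^3 + b' • θop^2 + c' • θop + d' • (1:EndP)) * D := by
  subst hb hc hd
  apply endp_ext
  intro n
  match n with
  | 0 =>
      simp only [Module.End.mul_apply, LinearMap.add_apply, LinearMap.smul_apply,
        Module.End.one_apply, map_add, map_smul, theta_apply, theta_pow_apply, D_apply]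
      norm_num
  | (m+1) =>
      simp only [Module.End.mul_apply, LinearMap.add_apply, LinearMap.smul_apply,
        Module.End.one_apply, map_add, map_smul, theta_apply, theta_pow_apply, D_apply,
        smul_smul, nsub1]
      match_scalars <;> (push_cast; ring)

/-- The key generic identity: all scalar parameters are free. -/
lemma key (s u t12 t11 t22 t21 t20 g1 g2 g3 g7 g8 g9 : ℂ) :
    H6gen (s+1) (u+t12+t11-3) (t12-9) (t11+2*t12-9) (t22+9) (t21+2*t22+9)
        (t20+t22+t21+3) (g1-1) (g2-1) (g3-1) (g7+1) (g8+1) (g9+1) * D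
      = D * H6gen s u t12 t11 t22 t21 t20 g1 g2 g3 g7 g8 g9 := by
  have D2eq : (D:EndP)^2 = D*D := pow_two D
  have D3eq : (D:EndP)^3 = D*(D*D) := by rw [pow_succ, pow_two, mul_assoc]
  -- term 1
  have b9 := hlin g9 (g9+1) rfl
  have b8 := pushR g8 (g8+1) rfl b9
  have b7 := pushR g7 (g7+1) rfl b8
  have a0 := pushR s (s+1) rfl b7
  have a1 := pushR (s+1) (s+1+1) rfl a0
  have h1 := pushR (s+2) (s+1+2) (by ring) a1
  -- term 2
  have hp1 := pushPoly (-3) t12 t11 u (t12-9) (t11+2*t12-9) (u+t12+t11-3)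
    (by ring) (by ring) (by ring)
  have c2 : D * (((-3:ℂ) • θop^3 + t12 • θop^2 + t11 • θop + u • (1:EndP)) * D)
      = ((-3:ℂ) • θop^3 + (t12-9) • θop^2 + (t11+2*t12-9) • θop
          + (u+t12+t11-3) • (1:EndP)) * (D*D) := by
    rw [← mul_assoc, hp1, mul_assoc]
  have c1 := pushR (s+1) (s+1+1) rfl c2
  have h2 := pushR (s+2) (s+1+2) (by ring) c1
  -- term 3
  have hp2 := pushPoly 3 t22 t21 t20 (t22+9) (t21+2*t22+9) (t20+t22+t21+3)
    (by ring) (by ring) (by ring)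
  have d2 : D * (((3:ℂ) • θop^3 + t22 • θop^2 + t21 • θop + t20 • (1:EndP)) * (D*D))
      = ((3:ℂ) • θop^3 + (t22+9) • θop^2 + (t21+2*t22+9) • θop
          + (t20+t22+t21+3) • (1:EndP)) * (D*(D*D)) := by
    rw [← mul_assoc, hp2, mul_assoc]
  have h3 := pushR (s+2) (s+1+2) (by ring) d2
  -- term 4
  have e3 := pushR (3-g3) (3-(g3-1)) (by ring) (rfl : D * (D*(D*D)) = D*(D*(D*D)))
  have e2 := pushR (3-g2) (3-(g2-1)) (by ring) e3
  have h4 := pushR (3-g1) (3-(g1-1)) (by ring) e2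
  have e5 : ∀ (XX YY : EndP), XX * -YY = -(XX * YY) := fun XX YY => mul_neg XX YY
  have e6 : ∀ (XX YY : EndP), -XX * YY = -(XX * YY) := fun XX YY => neg_mul XX YY
  have h4' : D * (-((θop + (3-g1) • 1) * ((θop + (3-g2) • 1) * (θop + (3-g3) • 1)))
        * (D*(D*D)))
      = -((θop + (3-(g1-1)) • 1) * ((θop + (3-(g2-1)) • 1) * (θop + (3-(g3-1)) • 1)))
        * (D*(D*(D*D))) := by
    simp only [e5, e6, mul_assoc]
    exact congrArg Neg.neg h4
  simp only [H6gen, D2eq, D3eq]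
  conv_lhs => rw [add_mul, add_mul, add_mul]
  conv_rhs => rw [mul_add, mul_add, mul_add]
  simp only [mul_assoc]
  rw [h1, h2, h3, h4']

lemma sC_sh (e1 e2 e3 e4 e5 e6 e7 e8 e9 : ℂ) :
    sC (e1-1) (e2-1) (e3-1) (e4-1) (e5-1) (e6-1) (e7+1) (e8+1) (e9+1)
      = sC e1 e2 e3 e4 e5 e6 e7 e8 e9 + 1 := by
  simp only [sC]; ring

lemma T12_sh (e1 e2 e3 e4 e5 e6 e7 e8 e9 : ℂ) :
    T12C (e1-1) (e2-1) (e3-1) (e4-1) (e5-1) (e6-1) (e7+1) (e8+1) (e9+1)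
      = T12C e1 e2 e3 e4 e5 e6 e7 e8 e9 - 9 := by
  simp only [T12C]; ring

lemma T11_sh (e1 e2 e3 e4 e5 e6 e7 e8 e9 : ℂ) :
    T11C (e1-1) (e2-1) (e3-1) (e4-1) (e5-1) (e6-1) (e7+1) (e8+1) (e9+1)
      = T11C e1 e2 e3 e4 e5 e6 e7 e8 e9 + 2 * T12C e1 e2 e3 e4 e5 e6 e7 e8 e9 - 9 := by
  simp only [T11C, T12C]; ring

lemma T22_sh (e1 e2 e3 e4 e5 e6 e7 e8 e9 : ℂ) :
    T22C (e1-1) (e2-1) (e3-1) (e4-1) (e5-1) (e6-1) (e7+1) (e8+1) (e9+1)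
      = T22C e1 e2 e3 e4 e5 e6 e7 e8 e9 + 9 := by
  simp only [T22C]; ring

lemma T21_sh (e1 e2 e3 e4 e5 e6 e7 e8 e9 : ℂ) :
    T21C (e1-1) (e2-1) (e3-1) (e4-1) (e5-1) (e6-1) (e7+1) (e8+1) (e9+1)
      = T21C e1 e2 e3 e4 e5 e6 e7 e8 e9 + 2 * T22C e1 e2 e3 e4 e5 e6 e7 e8 e9 + 9 := by
  simp only [T21C, T22C]; ring

lemma T20_sh (e1 e2 e3 e4 e5 e6 e7 e8 e9 u : ℂ) :
    T20C (e1-1) (e2-1) (e3-1) (e4-1) (e5-1) (e6-1) (e7+1) (e8+1) (e9+1)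
        (u - (20 - (e1 + e2 + e3)^2/3 - 2*(e1 + e2 + e3)*(e7 + e8 + e9)/3
              + (e4 + e5 + e6)^2/3 - (e7 + e8 + e9)^2/3
              - 2*(e1 + e2 + e3) + 7*(e7 + e8 + e9)
              + (e1*e2 + e1*e3 + e2*e3) - (e4*e5 + e4*e6 + e5*e6)
              + 2*(e7*e8 + e7*e9 + e8*e9)))
      = T20C e1 e2 e3 e4 e5 e6 e7 e8 e9 u + T22C e1 e2 e3 e4 e5 e6 e7 e8 e9
          + T21C e1 e2 e3 e4 e5 e6 e7 e8 e9 + 3 := by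
  simp only [T20C, T21C, T22C]; ring

lemma u_sh (e1 e2 e3 e4 e5 e6 e7 e8 e9 u : ℂ) :
    u - (20 - (e1 + e2 + e3)^2/3 - 2*(e1 + e2 + e3)*(e7 + e8 + e9)/3
              + (e4 + e5 + e6)^2/3 - (e7 + e8 + e9)^2/3
              - 2*(e1 + e2 + e3) + 7*(e7 + e8 + e9)
              + (e1*e2 + e1*e3 + e2*e3) - (e4*e5 + e4*e6 + e5*e6)
              + 2*(e7*e8 + e7*e9 + e8*e9))
      = u + T12C e1 e2 e3 e4 e5 e6 e7 e8 e9 + T11C e1 e2 e3 e4 e5 e6 e7 e8 e9 - 3 := by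
  simp only [T12C, T11C]; ring

/-- Shift operator of `H₆` for the block shift
`sh₃ : e → (e₁−1,…,e₆−1,e₇+1,e₈+1,e₉+1)`:
`H₆(sh₃(e), u − α₃) ∘ ∂ = ∂ ∘ H₆(e,u)` where
`α₃ = 20 − s₁₁²/3 − 2s₁₁s₁₃/3 + s₁₂²/3 − s₁₃²/3 − 2s₁₁ + 7s₁₃ + s₂₁ − s₂₂ + 2s₂₃`. -/
theorem H6_shift_operator_sh3 (e1 e2 e3 e4 e5 e6 e7 e8 e9 u : ℂ) :
    H6op (e1 - 1) (e2 - 1) (e3 - 1) (e4 - 1) (e5 - 1) (e6 - 1) (e7 + 1) (e8 + 1) (e9 + 1)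
        (u - (20 - (e1 + e2 + e3)^2/3 - 2*(e1 + e2 + e3)*(e7 + e8 + e9)/3
              + (e4 + e5 + e6)^2/3 - (e7 + e8 + e9)^2/3
              - 2*(e1 + e2 + e3) + 7*(e7 + e8 + e9)
              + (e1*e2 + e1*e3 + e2*e3) - (e4*e5 + e4*e6 + e5*e6)
              + 2*(e7*e8 + e7*e9 + e8*e9)))
      * D
    = D * H6op e1 e2 e3 e4 e5 e6 e7 e8 e9 u := by
  rw [H6op_eq, H6op_eq, sC_sh, T12_sh, T11_sh, T22_sh, T21_sh, T20_sh, u_sh]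
  exact key (sC e1 e2 e3 e4 e5 e6 e7 e8 e9) u
    (T12C e1 e2 e3 e4 e5 e6 e7 e8 e9) (T11C e1 e2 e3 e4 e5 e6 e7 e8 e9)
    (T22C e1 e2 e3 e4 e5 e6 e7 e8 e9) (T21C e1 e2 e3 e4 e5 e6 e7 e8 e9)
    (T20C e1 e2 e3 e4 e5 e6 e7 e8 e9 u) e1 e2 e3 e7 e8 e9
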